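/- If K is a positive semidefinite kernel on X and x₀ ∈ X has k_h(x₀,x₀) = 1/h · k(0) with k(0) > 0, then the localized posterior mean depends only on the training points xᵢ with k_h(xᵢ,x₀) > 0: if the weight of a training point is zero, removing that point from the formulas for m̃(x₀) and 𝒦̃(x₀,x₀) leaves them unchanged in the limit, i.e., as wᵢ → 0⁺ the i-th data point's contribution to K_{x₀X}(K_{XX} + σ²W⁻¹)⁻¹y vanishes. -/

import Mathlib

open Matrix Filter

/-! For positive weights `(K + σ² W⁻¹)⁻¹ = (W K + σ² I)⁻¹ W`, and the right-hand side is
continuous on all positive semidefinite `W`, where `W K + σ² I` stays invertible. At `wₙ = 0` the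
last row of `W` vanishes, so the solution of `(W K + σ² I) x = W y` has `xₙ = 0` and its remaining
coordinates solve the reduced system. -/

namespace Matrix

variable {m : Type*} [Fintype m] [DecidableEq m]

theorem inv_add_smul_inv_eq {R : Type*} [CommRing R] {D : Matrix m m R} (hD : IsUnit D.det)
    (K : Matrix m m R) (c : R) : (K + c • D⁻¹)⁻¹ = (D * K + c • 1)⁻¹ * D := by
  rw [← mul_nonsing_inv D hD, ← Matrix.mul_smul, ← mul_add, mul_inv_rev, mul_assoc,
    nonsing_inv_mul _ hD, mul_one]

open scoped ComplexOrder in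
theorem isUnit_det_mul_add_smul_one {𝕜 : Type*} [RCLike 𝕜] {D K : Matrix m m 𝕜}
    (hD : D.PosSemidef) (hK : K.PosSemidef) {c : 𝕜} (hc : 0 < c) :
    IsUnit (D * K + c • 1).det := by
  rw [isUnit_iff_ne_zero]
  intro hdet
  obtain ⟨v, hv, hv0⟩ := exists_mulVec_eq_zero_iff.mpr hdet
  have hDKv : D *ᵥ (K *ᵥ v) = -(c • v) := by
    rw [add_mulVec, ← mulVec_mulVec, smul_mulVec, one_mulVec] at hv0
    exact eq_neg_of_add_eq_zero_left hv0
  have hquad : star (K *ᵥ v) ⬝ᵥ (D *ᵥ (K *ᵥ v)) = -(c * (star v ⬝ᵥ (K *ᵥ v))) := by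
    rw [hDKv, dotProduct_neg, dotProduct_smul, star_mulVec, hK.1.eq, ← dotProduct_mulVec,
      smul_eq_mul]
  have hKv : K *ᵥ v = 0 := by
    refine (hK.dotProduct_mulVec_zero_iff v).mp ?_
    have h1 := hD.dotProduct_mulVec_nonneg (K *ᵥ v)
    have h2 := mul_nonneg hc.le (hK.dotProduct_mulVec_nonneg v)
    rw [hquad, neg_nonneg] at h1
    exact (mul_eq_zero.mp (le_antisymm h1 h2)).resolve_left hc.ne'
  rw [hKv, mulVec_zero, zero_eq_neg, smul_eq_zero] at hDKv
  exact hv (hDKv.resolve_left hc.ne')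

end Matrix

theorem ContinuousAt.matrix_inv {X m 𝕜 : Type*} [TopologicalSpace X] [Fintype m] [DecidableEq m]
    [Field 𝕜] [TopologicalSpace 𝕜] [IsTopologicalRing 𝕜] [ContinuousInv₀ 𝕜]
    {A : X → Matrix m m 𝕜} {x : X} (hA : ContinuousAt A x) (hx : IsUnit (A x).det) :
    ContinuousAt (fun t => (A t)⁻¹) x := by
  refine (continuousAt_matrix_inv _ ?_).comp hA
  rw [Ring.inverse_eq_inv']
  exact continuousAt_inv₀ hx.ne_zero

namespace Matrix

variable {R : Type*} [CommRing R] {n : ℕ}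

theorem dotProduct_snoc_zero (x : Fin (n + 1) → R) (v : Fin n → R) :
    x ⬝ᵥ Fin.snoc v 0 = (x ∘ Fin.castSucc) ⬝ᵥ v := by
  simp [dotProduct, Fin.sum_univ_castSucc]

theorem diagonal_snoc_zero_mulVec (w : Fin n → R) (y : Fin (n + 1) → R) :
    diagonal (Fin.snoc w 0) *ᵥ y = Fin.snoc (diagonal w *ᵥ (y ∘ Fin.castSucc)) 0 := by
  ext i
  induction i using Fin.lastCases <;> simp [mulVec_diagonal]

theorem mulVec_snoc_zero_castSucc (K : Matrix (Fin (n + 1)) (Fin (n + 1)) R) (z : Fin n → R)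
    (i : Fin n) :
    (K *ᵥ Fin.snoc z 0) i.castSucc = (K.submatrix Fin.castSucc Fin.castSucc *ᵥ z) i := by
  simp [mulVec, dotProduct, Fin.sum_univ_castSucc]

theorem diagonal_snoc_zero_mul_add_smul_one_mulVec_snoc_zero (w : Fin n → R)
    (K : Matrix (Fin (n + 1)) (Fin (n + 1)) R) (c : R) (z : Fin n → R) :
    (diagonal (Fin.snoc w 0) * K + c • 1) *ᵥ Fin.snoc z 0 =
      Fin.snoc ((diagonal w * K.submatrix Fin.castSucc Fin.castSucc + c • 1) *ᵥ z) 0 := by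
  simp only [add_mulVec, ← mulVec_mulVec, smul_mulVec, one_mulVec]
  ext i
  induction i using Fin.lastCases <;>
    simp [-mulVec_mulVec, mulVec_diagonal, mulVec_snoc_zero_castSucc]

theorem inv_diagonal_snoc_zero_mul_add_smul_one_mul_mulVec {w : Fin n → R}
    {K : Matrix (Fin (n + 1)) (Fin (n + 1)) R} {c : R}
    (hA : IsUnit (diagonal (Fin.snoc w 0) * K + c • 1).det)
    (hB : IsUnit (diagonal w * K.submatrix Fin.castSucc Fin.castSucc + c • 1).det)
    (y : Fin (n + 1) → R) :
    ((diagonal (Fin.snoc w 0) * K + c • 1)⁻¹ * diagonal (Fin.snoc w 0)) *ᵥ y =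
      Fin.snoc (((diagonal w * K.submatrix Fin.castSucc Fin.castSucc + c • 1)⁻¹ *
        diagonal w) *ᵥ (y ∘ Fin.castSucc)) 0 := by
  set B := diagonal w * K.submatrix Fin.castSucc Fin.castSucc + c • 1
  have hsol : (diagonal (Fin.snoc w 0) * K + c • 1) *ᵥ
      Fin.snoc ((B⁻¹ * diagonal w) *ᵥ (y ∘ Fin.castSucc)) 0 = diagonal (Fin.snoc w 0) *ᵥ y := by
    rw [diagonal_snoc_zero_mul_add_smul_one_mulVec_snoc_zero, diagonal_snoc_zero_mulVec,
      ← mulVec_mulVec, mulVec_mulVec _ B, mul_nonsing_inv _ hB, one_mulVec]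
  rw [← mulVec_mulVec, ← hsol, mulVec_mulVec, nonsing_inv_mul _ hA, one_mulVec]

end Matrix

/-- As the localizing weight of the last data point tends to `0⁺`, the
localized GP posterior mean computed with all `n+1` points tends to the
posterior mean computed with the first `n` points only. -/
theorem zero_weight_point_drops_out {n : ℕ}
    (K : Matrix (Fin (n + 1)) (Fin (n + 1)) ℝ) (hK : K.PosSemidef)
    (y kx : Fin (n + 1) → ℝ) (σ2 : ℝ) (hσ : 0 < σ2)
    (w : Fin n → ℝ) (hw : ∀ i, 0 < w i) :
    Tendsto
      (fun t : ℝ =>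
        kx ⬝ᵥ ((K + σ2 • (Matrix.diagonal
          (Fin.snoc w t : Fin (n + 1) → ℝ))⁻¹)⁻¹.mulVec y))
      (nhdsWithin 0 (Set.Ioi 0))
      (nhds ((kx ∘ Fin.castSucc) ⬝ᵥ
        ((K.submatrix Fin.castSucc Fin.castSucc +
          σ2 • (Matrix.diagonal w)⁻¹)⁻¹.mulVec (y ∘ Fin.castSucc)))) := by
  set D : ℝ → Matrix (Fin (n + 1)) (Fin (n + 1)) ℝ := fun t => diagonal (Fin.snoc w t)
  have hD_cont : Continuous D := (continuous_const.finSnoc continuous_id).matrix_diagonal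
  have hD_nonneg : (D 0).PosSemidef := posSemidef_diagonal_iff.mpr
    fun i => i.lastCases (by simp) fun j => by simpa using (hw j).le
  have isUnit_det_diagonal {k : ℕ} {d : Fin k → ℝ} (hd : ∀ i, 0 < d i) :
      IsUnit (diagonal d).det :=
    (isUnit_iff_isUnit_det _).mp (posDef_diagonal_iff.mpr hd).isUnit
  have hD_pos {t : ℝ} (ht : 0 < t) : IsUnit (D t).det :=
    isUnit_det_diagonal fun i => i.lastCases (by simpa using ht) fun j => by simpa using hw j
  have hA := isUnit_det_mul_add_smul_one hD_nonneg hK hσ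
  have hB := isUnit_det_mul_add_smul_one (posSemidef_diagonal_iff.mpr fun i => (hw i).le)
    (hK.submatrix Fin.castSucc) hσ
  set F : ℝ → ℝ := fun t => kx ⬝ᵥ (((D t * K + σ2 • 1)⁻¹ * D t) *ᵥ y)
  have hF_cont : ContinuousAt F 0 := by
    have hinv : ContinuousAt (fun t => (D t * K + σ2 • 1)⁻¹) 0 :=
      ContinuousAt.matrix_inv (by fun_prop) hA
    fun_prop
  have hF_zero : F 0 = (kx ∘ Fin.castSucc) ⬝ᵥ ((K.submatrix Fin.castSucc Fin.castSucc +
      σ2 • (diagonal w)⁻¹)⁻¹ *ᵥ (y ∘ Fin.castSucc)) := by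
    simp only [F, D, inv_diagonal_snoc_zero_mul_add_smul_one_mul_mulVec hA hB,
      dotProduct_snoc_zero, inv_add_smul_inv_eq (isUnit_det_diagonal hw)]
  have hF_eq : F =ᶠ[nhdsWithin 0 (Set.Ioi 0)] fun t => kx ⬝ᵥ ((K + σ2 • (D t)⁻¹)⁻¹ *ᵥ y) :=
    eventually_nhdsWithin_of_forall fun t ht => by simp only [F, inv_add_smul_inv_eq (hD_pos ht)]
  exact hF_zero ▸ hF_cont.continuousWithinAt.tendsto.congr' hF_eq
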